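/- If 0 < α < 1/2 then η_α is strictly convex on (0, π), and if 1/2 < α < 1 then η_α is strictly concave on (0, π). -/

import Mathlib

/-!
Differentiating, `η_κ(x) = 2 arctan (κ cot (x / 2))` has derivative
`-2κ / (1 + κ² - (1 - κ²) cos x)`, whose denominator is positive for `κ ≠ 0`. Since `cos` is
strictly decreasing on `(0, π)`, this derivative is strictly increasing there when `κ < 1` and
strictly decreasing when `κ > 1`; finally `κ_α = α / (1 - α) < 1` iff `α < 1 / 2`.
-/

open Real Set

lemma sin_half_pos {x : ℝ} (hx0 : 0 < x) (hx : x < 2 * π) : 0 < sin (x / 2) :=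
  sin_pos_of_pos_of_lt_pi (by linarith) (by linarith)

lemma one_add_sq_sub_mul_cos_pos {κ : ℝ} (hκ : κ ≠ 0) (x : ℝ) :
    0 < 1 + κ ^ 2 - (1 - κ ^ 2) * cos x := by
  nlinarith [neg_one_le_cos x, cos_le_one x, sq_pos_of_ne_zero hκ,
    mul_nonneg (sq_nonneg κ) (neg_le_iff_add_nonneg.1 (neg_one_le_cos x))]

lemma hasDerivAt_two_mul_arctan_mul_cot_half (κ : ℝ) {x : ℝ} (hx : sin (x / 2) ≠ 0) :
    HasDerivAt (fun x => 2 * arctan (κ * cot (x / 2)))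
      (-2 * κ / (1 + κ ^ 2 - (1 - κ ^ 2) * cos x)) x := by
  have hhalf : HasDerivAt (fun x : ℝ => x / 2) (1 / 2) x := (hasDerivAt_id x).div_const 2
  have hcot := (((hasDerivAt_cos _).comp x hhalf).div
    ((hasDerivAt_sin _).comp x hhalf) hx).const_mul κ
  simp only [cot_eq_cos_div_sin]
  refine (hcot.arctan.const_mul 2).congr_deriv ?_
  have hpy := sin_sq_add_cos_sq (x / 2)
  have hden : 1 + κ ^ 2 - (1 - κ ^ 2) * cos x =
      2 * (sin (x / 2) ^ 2 + κ ^ 2 * cos (x / 2) ^ 2) := by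
    rw [show cos x = 2 * cos (x / 2) ^ 2 - 1 by rw [← cos_two_mul]; ring_nf]
    linear_combination -2 * hpy
  have : sin (x / 2) ^ 2 + κ ^ 2 * cos (x / 2) ^ 2 ≠ 0 := by positivity
  rw [hden]
  simp only [Function.comp_apply, Pi.div_apply]
  field_simp
  linear_combination -κ * hpy

lemma sub_div_one_add_sq_sub_mul_cos {κ : ℝ} (hκ : κ ≠ 0) (x y : ℝ) :
    -2 * κ / (1 + κ ^ 2 - (1 - κ ^ 2) * cos y) - -2 * κ / (1 + κ ^ 2 - (1 - κ ^ 2) * cos x) =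
      2 * κ * (1 - κ ^ 2) * (cos x - cos y) /
        ((1 + κ ^ 2 - (1 - κ ^ 2) * cos x) * (1 + κ ^ 2 - (1 - κ ^ 2) * cos y)) := by
  have := (one_add_sq_sub_mul_cos_pos hκ x).ne'
  have := (one_add_sq_sub_mul_cos_pos hκ y).ne'
  field_simp
  ring

section

variable (κ : ℝ)

lemma continuousOn_two_mul_arctan_mul_cot_half :
    ContinuousOn (fun x => 2 * arctan (κ * cot (x / 2))) (Ioo 0 π) := fun x hx =>
  (hasDerivAt_two_mul_arctan_mul_cot_half κ
    (sin_half_pos hx.1 (by linarith [hx.2, pi_pos])).ne').continuousAt.continuousWithinAt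

lemma eqOn_deriv_two_mul_arctan_mul_cot_half :
    EqOn (deriv fun x => 2 * arctan (κ * cot (x / 2)))
      (fun x => -2 * κ / (1 + κ ^ 2 - (1 - κ ^ 2) * cos x)) (Ioo 0 π) := fun x hx =>
  (hasDerivAt_two_mul_arctan_mul_cot_half κ
    (sin_half_pos hx.1 (by linarith [hx.2, pi_pos])).ne').deriv

variable {κ}

theorem strictConvexOn_two_mul_arctan_mul_cot_half (hκ0 : 0 < κ) (hκ1 : κ < 1) :
    StrictConvexOn ℝ (Ioo 0 π) (fun x => 2 * arctan (κ * cot (x / 2))) := by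
  refine StrictMonoOn.strictConvexOn_of_deriv (convex_Ioo 0 π)
    (continuousOn_two_mul_arctan_mul_cot_half κ) ?_
  rw [interior_Ioo]
  refine StrictMonoOn.congr (fun x hx y hy hxy => ?_)
    (eqOn_deriv_two_mul_arctan_mul_cot_half κ).symm
  have hcos : 0 < cos x - cos y :=
    sub_pos.2 (strictAntiOn_cos (Ioo_subset_Icc_self hx) (Ioo_subset_Icc_self hy) hxy)
  have : 0 < 1 - κ ^ 2 := by nlinarith
  have := one_add_sq_sub_mul_cos_pos hκ0.ne' x
  have := one_add_sq_sub_mul_cos_pos hκ0.ne' y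
  rw [← sub_pos, sub_div_one_add_sq_sub_mul_cos hκ0.ne']
  positivity

theorem strictConcaveOn_two_mul_arctan_mul_cot_half (hκ1 : 1 < κ) :
    StrictConcaveOn ℝ (Ioo 0 π) (fun x => 2 * arctan (κ * cot (x / 2))) := by
  have hκ0 : 0 < κ := zero_lt_one.trans hκ1
  refine StrictAntiOn.strictConcaveOn_of_deriv (convex_Ioo 0 π)
    (continuousOn_two_mul_arctan_mul_cot_half κ) ?_
  rw [interior_Ioo]
  refine StrictAntiOn.congr (fun x hx y hy hxy => ?_)
    (eqOn_deriv_two_mul_arctan_mul_cot_half κ).symm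
  have hcos : 0 < cos x - cos y :=
    sub_pos.2 (strictAntiOn_cos (Ioo_subset_Icc_self hx) (Ioo_subset_Icc_self hy) hxy)
  have hκsq : 1 - κ ^ 2 < 0 := by nlinarith
  have := one_add_sq_sub_mul_cos_pos hκ0.ne' x
  have := one_add_sq_sub_mul_cos_pos hκ0.ne' y
  rw [← sub_neg, sub_div_one_add_sq_sub_mul_cos hκ0.ne']
  refine div_neg_of_neg_of_pos (mul_neg_of_neg_of_pos ?_ hcos) (by positivity)
  exact mul_neg_of_pos_of_neg (by positivity) hκsq

end

/-- If `0 < α < 1/2` then `η_α` is strictly convex on `(0, π)`;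
if `1/2 < α < 1` then `η_α` is strictly concave on `(0, π)`. -/
theorem eta_convex_concave (α : ℝ) (hα0 : 0 < α) (hα1 : α < 1) :
    (α < 1 / 2 →
      StrictConvexOn ℝ (Ioo 0 π) (fun x : ℝ => 2 * arctan ((α / (1 - α)) * Real.cot (x / 2)))) ∧
    (1 / 2 < α →
      StrictConcaveOn ℝ (Ioo 0 π) (fun x : ℝ => 2 * arctan ((α / (1 - α)) * Real.cot (x / 2)))) := by
  have h1α : 0 < 1 - α := sub_pos.2 hα1
  refine ⟨fun hα => strictConvexOn_two_mul_arctan_mul_cot_half (div_pos hα0 h1α) ?_,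
    fun hα => strictConcaveOn_two_mul_arctan_mul_cot_half ?_⟩
  · rw [div_lt_one h1α]; linarith
  · rw [one_lt_div h1α]; linarith
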